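/- Let (w_k)_{k∈ℕ} be a sequence of elements of a language L that is strictly decreasing with respect to <_ℓ, and let w be an ω-word such that w <_ℓ w_k for every k and such that every ω-word w' with w' <_ℓ w_k for all k satisfies w' ≤_ℓ w (that is, w is the greatest lower bound of the chain among ω-words). Then w is a limit of L. -/

import Mathlib

variable {α : Type*} [Fintype α] [LinearOrder α] [Nonempty α]

/-- `w↾n`, the length-`n` prefix of the ω-word `w`. -/
def restrict (w : ℕ → α) (n : ℕ) : List α := List.ofFn (fun i : Fin n => w i)

/-- `w` is a limit of `L`: every finite prefix of `w` is a proper prefix of some word of `L`. -/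
def blim (L : Set (List α)) : Set (ℕ → α) :=
  {w | ∀ n : ℕ, ∃ u ∈ L, restrict w n <+: u ∧ restrict w n ≠ u}

/-- `u <_ℓ w` for a word `u` and an ω-word `w`. -/
def wordLtOmega (u : List α) (w : ℕ → α) : Prop :=
  u = restrict w u.length ∨
    ∃ (i : ℕ) (h : i < u.length), u.take i = restrict w i ∧ u.get ⟨i, h⟩ < w i

/-- `w <_ℓ u` for an ω-word `w` and a word `u`. -/
def omegaLtWord (w : ℕ → α) (u : List α) : Prop :=
  ∃ (i : ℕ) (h : i < u.length), u.take i = restrict w i ∧ w i < u.get ⟨i, h⟩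

/-- `w <_ℓ w'` for ω-words. -/
def omegaLt (w w' : ℕ → α) : Prop :=
  ∃ n : ℕ, (∀ i < n, w i = w' i) ∧ w n < w' n

/-- `w ≤_ℓ w'` for ω-words. -/
def omegaLe (w w' : ℕ → α) : Prop := w = w' ∨ omegaLt w w'

/-- Concatenation `u·w` of a finite word and an ω-word. -/
def ocat (u : List α) (w : ℕ → α) : ℕ → α :=
  fun i => if h : i < u.length then u.get ⟨i, h⟩ else w (i - u.length)

/-- The strict order `u <_s v` on words. -/
def strictLt (u v : List α) : Prop :=
  ∃ (x y z : List α) (a b : α), a < b ∧ u = x ++ a :: y ∧ v = x ++ b :: z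

/-- `v^ω` for a nonempty word `v`. -/
def wpow (v : List α) (hv : v ≠ []) : ℕ → α :=
  fun i => v.get ⟨i % v.length, Nat.mod_lt _ (List.length_pos_iff.mpr hv)⟩

/-- `u^n`, the `n`-fold concatenation of the word `u` with itself. -/
def npow (u : List α) (n : ℕ) : List α := (List.replicate n u).flatten

lemma restrict_length (w : ℕ → α) (n : ℕ) : (restrict w n).length = n := by
  simp [restrict]

lemma restrict_getElem (w : ℕ → α) (n i : ℕ) (h : i < (restrict w n).length) :
    (restrict w n)[i] = w i := by
  simp [restrict]

lemma take_eq_restrict_iff (u : List α) (w : ℕ → α) (j : ℕ) (hj : j ≤ u.length) :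
    u.take j = restrict w j ↔ ∀ m, (hm : m < j) → u[m]'(lt_of_lt_of_le hm hj) = w m := by
  constructor
  · intro h m hm
    have h1 := List.getElem_of_eq h (i := m) (by simp; omega)
    rw [List.getElem_take] at h1
    simpa [restrict] using h1
  · intro h
    apply List.ext_getElem
    · simp [restrict, hj]
    · intro m h1 h2
      have hm : m < j := by simpa [hj] using h1
      simpa [restrict, hm] using h m hm

lemma omegaLtWord_iff (w : ℕ → α) (u : List α) :
    omegaLtWord w u ↔ ∃ (i : ℕ) (h : i < u.length),
      (∀ m, (hm : m < i) → u[m]'(lt_of_lt_of_le hm (le_of_lt h)) = w m) ∧ w i < u[i] := by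
  unfold omegaLtWord
  constructor
  · rintro ⟨i, h, h1, h2⟩
    exact ⟨i, h, (take_eq_restrict_iff u w i h.le).mp h1, by simpa [List.get_eq_getElem] using h2⟩
  · rintro ⟨i, h, h1, h2⟩
    exact ⟨i, h, (take_eq_restrict_iff u w i h.le).mpr h1, by simpa [List.get_eq_getElem] using h2⟩

lemma omegaLtWord_cons (a : α) (u : List α) (w : ℕ → α) :
    omegaLtWord w (a :: u) ↔ (w 0 < a) ∨ (w 0 = a ∧ omegaLtWord (fun j => w (j+1)) u) := by
  rw [omegaLtWord_iff, omegaLtWord_iff]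
  constructor
  · rintro ⟨i, h, h1, h2⟩
    match i with
    | 0 => exact Or.inl (by simpa using h2)
    | m+1 =>
      refine Or.inr ⟨(h1 0 (Nat.succ_pos m)).symm, m, by simpa using h, ?_, by simpa using h2⟩
      intro j hj
      simpa using h1 (j+1) (by omega)
  · rintro (h | ⟨h0, i, h, h1, h2⟩)
    · exact ⟨0, by simp, by simp, by simpa using h⟩
    · refine ⟨i+1, by simpa using h, ?_, by simpa using h2⟩
      intro m hm
      match m with
      | 0 => simpa using h0.symm
      | j+1 => simpa using h1 j (by omega)

lemma lex_trans_omega : ∀ {v u : List α}, List.Lex (· < ·) v u →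
    ∀ w : ℕ → α, omegaLtWord w v → omegaLtWord w u := by
  intro v u h
  induction h with
  | nil =>
    intro w hw
    obtain ⟨i, hi, _⟩ := hw
    simp at hi
  | @rel a l b l' hab =>
    intro w hw
    rw [omegaLtWord_cons] at hw ⊢
    left
    rcases hw with h | ⟨h0, _⟩
    · exact h.trans hab
    · exact h0 ▸ hab
  | @cons a l l' h ih =>
    intro w hw
    rw [omegaLtWord_cons] at hw ⊢
    rcases hw with h0 | ⟨h0, hrest⟩
    · exact Or.inl h0
    · exact Or.inr ⟨h0, ih _ hrest⟩

lemma not_lex_of_prefix : ∀ {u v : List α}, u <+: v → ¬ List.Lex (· < ·) v u := by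
  intro u
  induction u with
  | nil => intro v _ h; exact List.not_lex_nil h
  | cons a u ih =>
    intro v hp h
    match v, hp with
    | b :: v, hp =>
      obtain ⟨rfl, hp'⟩ := List.cons_prefix_cons.mp hp
      cases h with
      | cons h => exact ih hp' h
      | rel h => exact lt_irrefl _ h

/-- the greatest lower bound (among ω-words) of a strictly `<_ℓ`-decreasing
sequence in `L` is a limit of `L`. -/
theorem stmt4 (L : Set (List α)) (ws : ℕ → List α) (hmem : ∀ k, ws k ∈ L)
    (hdec : ∀ j k : ℕ, j < k → List.Lex (· < ·) (ws k) (ws j))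
    (w : ℕ → α) (hlb : ∀ k, omegaLtWord w (ws k))
    (hglb : ∀ w' : ℕ → α, (∀ k, omegaLtWord w' (ws k)) → omegaLe w' w) :
    w ∈ blim L := by
  intro n
  by_contra hcon
  push_neg at hcon
  -- every witness position is < n
  have hwit : ∀ k, ∃ (i : ℕ), i < n ∧ ∃ (h : i < (ws k).length),
      (ws k).take i = restrict w i ∧ w i < (ws k)[i] := by
    intro k
    obtain ⟨i, h, h1, h2⟩ := hlb k
    refine ⟨i, ?_, h, h1, by simpa [List.get_eq_getElem] using h2⟩
    by_contra hni
    push_neg at hni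
    -- then restrict w n is a proper prefix of ws k, contradiction
    have hpre : restrict w n <+: ws k := by
      have h1' : restrict w i <+: ws k := h1 ▸ List.take_prefix i (ws k)
      refine List.IsPrefix.trans ?_ h1'
      refine ⟨restrict (fun j => w (n + j)) (i - n), ?_⟩
      apply List.ext_getElem
      · simp [restrict]; omega
      · intro m h1 h2
        simp only [restrict] at *
        rcases lt_or_ge m n with hm | hm
        · simp_all [List.getElem_append, restrict_length]
        · rw [List.getElem_append_right (by simpa [restrict] using hm)]
          simp [restrict]
          congr 1
          omega
    have hne : restrict w n ≠ ws k := by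
      intro he
      have := restrict_length w n
      rw [he] at this
      omega
    exact hne (hcon (ws k) (hmem k) hpre)
  choose iw hiwn hiwlen htake hlt using hwit
  -- pigeonhole: find i < n and a with infinitely many k having iw k = i and (ws k)[i] = a
  obtain ⟨⟨⟨i, hin⟩, a⟩, hfib⟩ := Finite.exists_infinite_fiber
    (fun k => ((⟨iw k, hiwn k⟩ : Fin n), ((ws k)[iw k]'(hiwlen k) : α)))
  rw [Set.infinite_coe_iff] at hfib
  set S : Set ℕ := {k | iw k = i ∧ (ws k)[iw k]'(hiwlen k) = a} with hS
  have hSfib : ∀ k, k ∈ S ↔ iw k = i ∧ (ws k)[iw k]'(hiwlen k) = a := fun k => Iff.rfl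
  have hSinf : S.Infinite := by
    apply hfib.mono
    intro k hk
    simp only [Set.mem_preimage, Set.mem_singleton_iff, Prod.mk.injEq, Fin.mk.injEq] at hk
    exact ⟨hk.1, hk.2⟩
  -- basic facts for k ∈ S
  have hSprop : ∀ k ∈ S, ∃ (h : i < (ws k).length),
      (ws k).take i = restrict w i ∧ w i < a ∧ (ws k)[i] = a := by
    rintro k ⟨hk1, hk2⟩
    subst hk1
    exact ⟨hiwlen k, htake k, hk2 ▸ hlt k, hk2⟩
  obtain ⟨k₀, hk₀⟩ := hSinf.nonempty
  obtain ⟨_, _, hwia, _⟩ := hSprop k₀ hk₀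
  -- the bottom element
  have hbot : ∃ b : α, ∀ x : α, b ≤ x :=
    ⟨Finset.univ.min' Finset.univ_nonempty, fun x => Finset.min'_le _ x (Finset.mem_univ x)⟩
  obtain ⟨b0, hb0⟩ := hbot
  set w' : ℕ → α := fun j => if j < i then w j else if j = i then a else b0 with hw'
  -- if k ∈ S and w' is not < ws k, then ws k is a prefix determined by w'
  have hkey : ∀ k ∈ S, ¬ omegaLtWord w' (ws k) → ws k = restrict w' (ws k).length := by
    intro k hk hno
    obtain ⟨hilen, htk, _, hia⟩ := hSprop k hk
    have hall : ∀ j, (hj : j < (ws k).length) → (ws k)[j] = w' j := by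
      intro j
      induction j using Nat.strong_induction_on with
      | _ j IH =>
      intro hj
      rcases lt_trichotomy j i with hji | rfl | hij
      · have := (take_eq_restrict_iff (ws k) w i hilen.le).mp htk j hji
        simp [hw', hji, this]
      · simp [hw', hia]
      · have hwj : w' j = b0 := by
          simp only [hw']
          rw [if_neg (show ¬ j < i by omega), if_neg (show ¬ j = i by omega)]
        rw [hwj]
        by_contra hne
        apply hno
        rw [omegaLtWord_iff]
        refine ⟨j, hj, ?_, ?_⟩
        · intro m hm
          exact IH m hm (lt_trans hm hj)
        · rw [hwj]
          exact lt_of_le_of_ne (hb0 _) (fun he => hne he.symm)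
    apply List.ext_getElem (by rw [restrict_length])
    intro j hj hj'
    rw [restrict_getElem]
    exact hall j hj
  -- cofinally many k ∈ S satisfy omegaLtWord w' (ws k)
  have hcof : ∀ K : ℕ, ∃ k ∈ S, K < k ∧ omegaLtWord w' (ws k) := by
    intro K
    by_contra hnc
    push_neg at hnc
    set T : Set ℕ := {k | k ∈ S ∧ K < k} with hT
    have hTinf : T.Infinite := by
      have : S \ {k | k ≤ K} ⊆ T := by
        rintro k ⟨h1, h2⟩
        exact ⟨h1, by simpa using h2⟩
      exact ((hSinf.diff (Set.finite_Iic K)).mono this)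
    -- on T, ws k is a prefix of w', and lengths strictly decrease
    have hpref : ∀ k ∈ T, ws k = restrict w' (ws k).length := by
      rintro k ⟨hkS, hkK⟩
      exact hkey k hkS (hnc k hkS hkK)
    have hlen : ∀ k ∈ T, ∀ k' ∈ T, k < k' → (ws k').length < (ws k).length := by
      intro k hk k' hk' hlt'
      by_contra hge
      push_neg at hge
      have hp : ws k <+: ws k' := by
        rw [hpref k hk, hpref k' hk']
        refine ⟨restrict (fun j => w' ((ws k).length + j)) ((ws k').length - (ws k).length), ?_⟩
        apply List.ext_getElem
        · simp [restrict_length, List.length_append]; omega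
        · intro m h1 h2
          rw [restrict_getElem]
          rcases lt_or_ge m (ws k).length with hm | hm
          · rw [List.getElem_append_left (by rwa [restrict_length]), restrict_getElem]
          · rw [List.getElem_append_right (by rwa [restrict_length]), restrict_getElem]
            rw [restrict_length]
            congr 1
            omega
      exact not_lex_of_prefix hp (hdec k k' hlt')
    -- build an impossible descent
    have hdesc : ∀ d : ℕ, ∀ k ∈ T, ∃ k' ∈ T, (ws k').length + d ≤ (ws k).length := by
      intro d
      induction d with
      | zero => intro k hk; exact ⟨k, hk, by omega⟩
      | succ d IH =>
        intro k hk
        obtain ⟨k', hk', hle⟩ := IH k hk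
        obtain ⟨k'', hk'', hgt⟩ := hTinf.exists_gt k'
        have := hlen k' hk' k'' hk'' hgt
        exact ⟨k'', hk'', by omega⟩
    obtain ⟨kT, hkT⟩ := hTinf.nonempty
    obtain ⟨k', _, hle⟩ := hdesc ((ws kT).length + 1) kT hkT
    omega
  -- w' is a lower bound of the whole sequence
  have hlb' : ∀ k, omegaLtWord w' (ws k) := by
    intro k
    obtain ⟨m, _, hmk, hm⟩ := hcof k
    exact lex_trans_omega (hdec k m hmk) w' hm
  -- but w < w', contradicting hglb
  have := hglb w' hlb'
  rcases this with heq | hltw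
  · have h2 : w' i = a := by simp [hw']
    rw [heq] at h2
    exact lt_irrefl _ (h2 ▸ hwia)
  · obtain ⟨m, hagree, hm⟩ := hltw
    rcases lt_trichotomy m i with hmi | rfl | him
    · simp only [hw', if_pos hmi] at hm
      exact lt_irrefl _ hm
    · simp only [hw', lt_irrefl, if_neg (lt_irrefl _), if_pos rfl] at hm
      exact absurd hm (not_lt_of_gt hwia)
    · have h3 : w' i = w i := (hagree i him).symm.symm
      simp only [hw', if_neg (lt_irrefl i), if_pos rfl] at h3
      exact absurd h3 (ne_of_gt hwia)
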